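/- Let f : M → M be a C¹ map of a compact Riemannian manifold M with Lebesgue (volume) measure Leb, eventually volume expanding with constant λ > 0, and let h(x) = min{n > 0 : |det Df^n(x)| ≥ e^{λn}}, Γ_n = {x : h(x) ≥ n}. If there exist constants C, α > 0 such that Leb(Γ_n) ≤ C·e^{−αn} for every n ≥ 1, then there exists β > 0 such that for Lebesgue almost every x ∈ M there is C_x > 0 with |det Df^n(y)| > C_x · e^{βn} for every n ≥ 1 and every y ∈ f^{−n}(x). -/

import Mathlib

open MeasureTheory Set Filter Function Real ENNReal

/-- `|det Df^n(x)|`: the absolute value of the Jacobian determinant of the `n`-th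
iterate of `f` at `x`. -/
noncomputable def absDetIter {d : ℕ}
    (f : EuclideanSpace ℝ (Fin d) → EuclideanSpace ℝ (Fin d)) (n : ℕ)
    (x : EuclideanSpace ℝ (Fin d)) : ℝ :=
  |(fderiv ℝ (f^[n]) x).det|

/-- `h(x) = min {n > 0 : |det Df^n(x)| ≥ e^{λ n}}`, with value `∞` if no such `n` exists. -/
noncomputable def firstExpTime {d : ℕ}
    (f : EuclideanSpace ℝ (Fin d) → EuclideanSpace ℝ (Fin d)) (lam : ℝ)
    (x : EuclideanSpace ℝ (Fin d)) : ℕ∞ :=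
  sInf {N : ℕ∞ | ∃ m : ℕ, (m : ℕ∞) = N ∧ 0 < m ∧ Real.exp (lam * m) ≤ absDetIter f m x}

/-- `Γ_n = {x ∈ M : h(x) ≥ n}`. -/
noncomputable def GammaSet {d : ℕ} (M : Set (EuclideanSpace ℝ (Fin d)))
    (f : EuclideanSpace ℝ (Fin d) → EuclideanSpace ℝ (Fin d)) (lam : ℝ) (n : ℕ) :
    Set (EuclideanSpace ℝ (Fin d)) :=
  {x ∈ M | (n : ℕ∞) ≤ firstExpTime f lam x}

/-!
Let `γ = min λ α` and call `y ∈ M` slow at time `n` if `|det Df^n(y)| < e^{γn/2}`. Cut the orbit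
of a slow `y` at the last time `t < n` with `|det Df^t(y)| ≥ e^{λt}`: then `f^t(y) ∈ Γ_{n-t}`, and
by the chain rule `|det Df^{n-t}(f^t y)| ≤ e^{γn/2 - λt}`. The change of variables inequality
therefore bounds the volume of the image under `f^n` of the slow points by
`∑_{t<n} e^{γn/2 - λt} C e^{-α(n-t)} ≤ C n e^{-γn/2}`, which is summable, so by Borel–Cantelli
almost every `x` has no slow `n`-th preimage for `n` large. For each of the finitely many
remaining `n`, `|det Df^n|` is bounded away from `0` on the compact fibre `M ∩ f^{-n}(x)`,
because almost every `x` is not the image of a critical point of an iterate.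
-/

protected theorem ContDiff.iterate {𝕜 E : Type*} [NontriviallyNormedField 𝕜]
    [NormedAddCommGroup E] [NormedSpace 𝕜 E] {f : E → E} {n : WithTop ℕ∞}
    (hf : ContDiff 𝕜 n f) (k : ℕ) : ContDiff 𝕜 n f^[k] := by
  induction k with
  | zero => exact contDiff_id
  | succ k ih => rw [iterate_succ']; exact hf.comp ih

theorem addHaar_image_le_mul_of_abs_det_fderiv_le {E : Type*} [NormedAddCommGroup E]
    [NormedSpace ℝ E] [FiniteDimensional ℝ E] [MeasurableSpace E] [BorelSpace E]
    (μ : Measure E) [μ.IsAddHaarMeasure] {g : E → E} (hg : Differentiable ℝ g) {s : Set E}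
    (hs : MeasurableSet s) {c : ℝ} (hc : ∀ x ∈ s, |(fderiv ℝ g x).det| ≤ c) :
    μ (g '' s) ≤ ENNReal.ofReal c * μ s :=
  calc μ (g '' s) ≤ ∫⁻ x in s, ENNReal.ofReal |(fderiv ℝ g x).det| ∂μ :=
        addHaar_image_le_lintegral_abs_det_fderiv μ hs fun x _ ↦
          (hg x).hasFDerivAt.hasFDerivWithinAt
    _ ≤ ∫⁻ _ in s, ENNReal.ofReal c ∂μ :=
        setLIntegral_mono measurable_const fun x hx ↦ ENNReal.ofReal_le_ofReal (hc x hx)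
    _ = ENNReal.ofReal c * μ s := setLIntegral_const s _

theorem exists_pos_forall_of_eventually_one {P : ℕ → ℝ → Prop} (hP : ∀ n, Antitone (P n))
    (hpos : ∀ n, ∃ c > 0, P n c) (hev : ∀ᶠ n in atTop, P n 1) : ∃ c > 0, ∀ n, P n c := by
  obtain ⟨N, hN⟩ := eventually_atTop.1 hev
  have hprefix : ∀ K, ∃ c > 0, c ≤ 1 ∧ ∀ n < K, P n c := by
    intro K
    induction K with
    | zero => exact ⟨1, one_pos, le_rfl, fun n hn ↦ absurd hn n.not_lt_zero⟩
    | succ K ih =>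
      obtain ⟨c, hc, hc1, hlt⟩ := ih
      obtain ⟨c', hc', hK⟩ := hpos K
      refine ⟨min c c', lt_min hc hc', (min_le_left _ _).trans hc1, fun n hn ↦ ?_⟩
      rcases Nat.lt_succ_iff_lt_or_eq.1 hn with hn | rfl
      · exact hP n (min_le_left _ _) (hlt n hn)
      · exact hP n (min_le_right _ _) hK
  obtain ⟨c, hc, hc1, hlt⟩ := hprefix N
  exact ⟨c, hc, fun n ↦ if h : n < N then hlt n h else hP n hc1 (hN n (not_lt.1 h))⟩

section
variable {d : ℕ} {M : Set (EuclideanSpace ℝ (Fin d))}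
  {f : EuclideanSpace ℝ (Fin d) → EuclideanSpace ℝ (Fin d)}

theorem absDetIter_zero (x : EuclideanSpace ℝ (Fin d)) : absDetIter f 0 x = 1 := by
  simp [absDetIter, ContinuousLinearMap.det, ContinuousLinearMap.coe_id]

theorem absDetIter_add (hf : Differentiable ℝ f) (m t : ℕ) (y : EuclideanSpace ℝ (Fin d)) :
    absDetIter f (m + t) y = absDetIter f m (f^[t] y) * absDetIter f t y := by
  rw [absDetIter, iterate_add, fderiv_comp y ((hf.iterate m) _) ((hf.iterate t) y),
    ContinuousLinearMap.det, ContinuousLinearMap.toLinearMap_comp, LinearMap.det_comp, abs_mul]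
  rfl

theorem exp_mul_le_absDetIter_add (hf : Differentiable ℝ f) {lam : ℝ} {s t : ℕ}
    {y : EuclideanSpace ℝ (Fin d)} (hs : exp (lam * s) ≤ absDetIter f s (f^[t] y))
    (ht : exp (lam * t) ≤ absDetIter f t y) : exp (lam * ↑(s + t)) ≤ absDetIter f (s + t) y := by
  rw [absDetIter_add hf, Nat.cast_add, mul_add, exp_add]
  exact mul_le_mul hs ht (exp_pos _).le (abs_nonneg _)

theorem continuous_absDetIter (hf : ContDiff ℝ 1 f) (n : ℕ) : Continuous (absDetIter f n) :=
  continuous_abs.comp (ContinuousLinearMap.continuous_det.comp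
    ((hf.iterate n).continuous_fderiv one_ne_zero))

theorem mem_GammaSet_iff {lam : ℝ} {n : ℕ} {x : EuclideanSpace ℝ (Fin d)} :
    x ∈ GammaSet M f lam n ↔
      x ∈ M ∧ ∀ s : ℕ, 0 < s → s < n → absDetIter f s x < exp (lam * s) := by
  simp only [GammaSet, firstExpTime, mem_ofPred_eq, le_sInf_iff]
  refine and_congr_right fun _ ↦ ⟨fun h s hs hsn ↦ ?_, fun h N ⟨s, hsN, hs, hle⟩ ↦ ?_⟩
  · exact not_le.1 fun hle ↦ (Nat.cast_le.1 (h s ⟨s, rfl, hs, hle⟩)).not_gt hsn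
  · exact hsN ▸ Nat.cast_le.2 (not_lt.1 fun hsn ↦ (h s hs hsn).not_ge hle)

theorem measurableSet_GammaSet (hM : IsClosed M) (hf : ContDiff ℝ 1 f) (lam : ℝ) (n : ℕ) :
    MeasurableSet (GammaSet M f lam n) := by
  have : GammaSet M f lam n =
      M ∩ ⋂ s ∈ {s : ℕ | 0 < s ∧ s < n}, {x | absDetIter f s x < exp (lam * s)} := by
    ext x
    simp [mem_GammaSet_iff]
  rw [this]
  exact hM.measurableSet.inter <| .biInter (to_countable _) fun s _ ↦
    (isOpen_lt (continuous_absDetIter hf s) continuous_const).measurableSet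

theorem exists_lt_iterate_mem_GammaSet (hf : Differentiable ℝ f) (hfM : MapsTo f M M)
    {lam b : ℝ} (hb : b ≤ lam) {n : ℕ} {y : EuclideanSpace ℝ (Fin d)} (hy : y ∈ M)
    (hslow : absDetIter f n y < exp (b * n)) :
    ∃ t < n, f^[t] y ∈ GammaSet M f lam (n - t) ∧
      absDetIter f (n - t) (f^[t] y) ≤ exp (b * n - lam * t) := by
  classical
  set P : ℕ → Prop := fun t ↦ exp (lam * t) ≤ absDetIter f t y
  set t := Nat.findGreatest P n
  have hPt : P t := Nat.findGreatest_spec (Nat.zero_le n) (by simp [P, absDetIter_zero])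
  have htn : t < n := by
    refine (Nat.findGreatest_le n).lt_of_ne fun htn ↦ (lt_irrefl (exp (lam * n))) ?_
    calc exp (lam * n) ≤ absDetIter f n y := htn ▸ hPt
      _ < exp (b * n) := hslow
      _ ≤ exp (lam * n) := by gcongr
  refine ⟨t, htn, mem_GammaSet_iff.2 ⟨hfM.iterate t hy, fun s hs hsn ↦ ?_⟩, ?_⟩
  · by_contra! hle
    exact Nat.findGreatest_is_greatest (lt_add_of_pos_left t hs) (by omega)
      (exp_mul_le_absDetIter_add hf hle hPt)
  · rw [exp_sub, le_div_iff₀ (exp_pos _)]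
    calc absDetIter f (n - t) (f^[t] y) * exp (lam * t)
        ≤ absDetIter f (n - t) (f^[t] y) * absDetIter f t y := by
          gcongr
          exact abs_nonneg _
      _ = absDetIter f n y := by rw [← absDetIter_add hf, Nat.sub_add_cancel htn.le]
      _ ≤ exp (b * n) := hslow.le

theorem image_slow_subset_iUnion_image_GammaSet (hf : Differentiable ℝ f)
    (hfM : MapsTo f M M) {lam b : ℝ} (hb : b ≤ lam) (n : ℕ) :
    f^[n] '' {y ∈ M | absDetIter f n y < exp (b * n)} ⊆
      ⋃ t ∈ Finset.range n, f^[n - t] ''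
        {z ∈ GammaSet M f lam (n - t) | absDetIter f (n - t) z ≤ exp (b * n - lam * t)} := by
  rintro _ ⟨y, ⟨hy, hslow⟩, rfl⟩
  obtain ⟨t, htn, hΓ, hdet⟩ := exists_lt_iterate_mem_GammaSet hf hfM hb hy hslow
  refine mem_biUnion (Finset.mem_coe.2 (Finset.mem_range.2 htn)) ⟨f^[t] y, ⟨hΓ, hdet⟩, ?_⟩
  rw [← iterate_add_apply, Nat.sub_add_cancel htn.le]

theorem volume_image_GammaSet_le (hM : IsClosed M) (hf : ContDiff ℝ 1 f) {lam α C : ℝ}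
    (hGamma : ∀ n : ℕ, 1 ≤ n →
      volume (GammaSet M f lam n) ≤ ENNReal.ofReal (C * exp (-α * n)))
    {m : ℕ} (hm : 1 ≤ m) (c : ℝ) :
    volume (f^[m] '' {z ∈ GammaSet M f lam m | absDetIter f m z ≤ c}) ≤
      ENNReal.ofReal c * (ENNReal.ofReal C * ENNReal.ofReal (exp (-α * m))) := by
  have hmeas : MeasurableSet {z ∈ GammaSet M f lam m | absDetIter f m z ≤ c} :=
    (measurableSet_GammaSet hM hf lam m).inter
      (measurableSet_le (continuous_absDetIter hf m).measurable measurable_const)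
  calc _ ≤ ENNReal.ofReal c * volume {z ∈ GammaSet M f lam m | absDetIter f m z ≤ c} :=
        addHaar_image_le_mul_of_abs_det_fderiv_le volume
          ((hf.differentiable one_ne_zero).iterate m) hmeas fun z hz ↦ hz.2
    _ ≤ _ := by
        rw [← ENNReal.ofReal_mul' (exp_pos _).le]
        gcongr
        exact (measure_mono fun z hz ↦ hz.1).trans (hGamma m hm)

theorem volume_image_slow_le (hM : IsClosed M) (hf : ContDiff ℝ 1 f) (hfM : MapsTo f M M)
    {lam α b γ C : ℝ} (hb : b ≤ lam) (hγlam : γ ≤ lam) (hγα : γ ≤ α)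
    (hGamma : ∀ n : ℕ, 1 ≤ n →
      volume (GammaSet M f lam n) ≤ ENNReal.ofReal (C * exp (-α * n))) (n : ℕ) :
    volume (f^[n] '' {y ∈ M | absDetIter f n y < exp (b * n)}) ≤
      ENNReal.ofReal C * ENNReal.ofReal (n * exp ((b - γ) * n)) := by
  have hterm : ∀ t < n, volume (f^[n - t] ''
      {z ∈ GammaSet M f lam (n - t) | absDetIter f (n - t) z ≤ exp (b * n - lam * t)}) ≤
        ENNReal.ofReal C * ENNReal.ofReal (exp ((b - γ) * n)) := by
    intro t htn
    refine (volume_image_GammaSet_le hM hf hGamma (by omega) _).trans ?_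
    rw [mul_left_comm, ← ENNReal.ofReal_mul (exp_pos _).le, ← exp_add, Nat.cast_sub htn.le]
    gcongr
    nlinarith [(Nat.cast_lt.2 htn : (t : ℝ) < n), (t.cast_nonneg : (0 : ℝ) ≤ t)]
  calc _ ≤ ∑ t ∈ Finset.range n, volume (f^[n - t] ''
        {z ∈ GammaSet M f lam (n - t) | absDetIter f (n - t) z ≤ exp (b * n - lam * t)}) :=
        (measure_mono (image_slow_subset_iUnion_image_GammaSet
          (hf.differentiable one_ne_zero) hfM hb n)).trans (measure_biUnion_finset_le _ _)
    _ ≤ ∑ _t ∈ Finset.range n, ENNReal.ofReal C * ENNReal.ofReal (exp ((b - γ) * n)) :=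
        Finset.sum_le_sum fun t ht ↦ hterm t (Finset.mem_range.1 ht)
    _ = ENNReal.ofReal C * ENNReal.ofReal (n * exp ((b - γ) * n)) := by
        rw [Finset.sum_const, Finset.card_range, nsmul_eq_mul,
          ENNReal.ofReal_mul n.cast_nonneg, ENNReal.ofReal_natCast]
        ring

theorem ae_eventually_notMem_image_slow (hM : IsClosed M) (hf : ContDiff ℝ 1 f)
    (hfM : MapsTo f M M) {lam α γ C : ℝ} (hγ : 0 < γ) (hγlam : γ ≤ lam) (hγα : γ ≤ α)
    (hGamma : ∀ n : ℕ, 1 ≤ n →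
      volume (GammaSet M f lam n) ≤ ENNReal.ofReal (C * exp (-α * n))) :
    ∀ᵐ x, ∀ᶠ n in atTop, x ∉ f^[n] '' {y ∈ M | absDetIter f n y < exp (γ / 2 * n)} := by
  have hb : γ / 2 ≤ lam := by linarith
  refine ae_eventually_notMem (ne_top_of_le_ne_top ?_ (ENNReal.tsum_le_tsum fun n ↦
    volume_image_slow_le hM hf hfM hb hγlam hγα hGamma n))
  have hsum : Summable fun n : ℕ ↦ (n : ℝ) * exp ((γ / 2 - γ) * n) := by
    simpa [show γ / 2 - γ = -(γ / 2) by ring] using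
      summable_pow_mul_exp_neg_nat_mul 1 (half_pos hγ)
  rw [ENNReal.tsum_mul_left, ← ENNReal.ofReal_tsum_of_nonneg (fun n ↦ by positivity) hsum]
  exact ENNReal.mul_ne_top ofReal_ne_top ofReal_ne_top

theorem ae_absDetIter_pos_of_iterate_eq (hf : Differentiable ℝ f) :
    ∀ᵐ x, ∀ n y, f^[n] y = x → 0 < absDetIter f n y := by
  have hnull : volume (⋃ n, f^[n] '' {y | absDetIter f n y = 0}) = 0 :=
    measure_iUnion_null fun n ↦ addHaar_image_eq_zero_of_det_fderivWithin_eq_zero volume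
      (fun y _ ↦ ((hf.iterate n) y).hasFDerivAt.hasFDerivWithinAt) fun y hy ↦ abs_eq_zero.1 hy
  filter_upwards [measure_eq_zero_iff_ae_notMem.1 hnull] with x hx n y hyx
  exact (abs_nonneg _).lt_of_ne' fun h0 ↦ hx (mem_iUnion.2 ⟨n, y, h0, hyx⟩)

theorem exists_pos_mul_exp_le_absDetIter (hM : IsCompact M) (hf : ContDiff ℝ 1 f)
    {x : EuclideanSpace ℝ (Fin d)} (hx : ∀ n y, f^[n] y = x → 0 < absDetIter f n y)
    (β : ℝ) (n : ℕ) : ∃ c > 0, ∀ y ∈ M, f^[n] y = x → c * exp (β * n) ≤ absDetIter f n y := by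
  have hfiber : IsCompact (M ∩ f^[n] ⁻¹' {x}) :=
    hM.inter_right (isClosed_singleton.preimage (hf.iterate n).continuous)
  obtain ⟨c, hc, hle⟩ := hfiber.exists_forall_le' (continuous_absDetIter hf n).continuousOn
    fun y hy ↦ hx n y hy.2
  refine ⟨c * exp (-(β * n)), by positivity, fun y hy hyx ↦ ?_⟩
  rw [mul_assoc, ← exp_add, neg_add_cancel, exp_zero, mul_one]
  exact hle y ⟨hy, hyx⟩

end

theorem backward_contraction_exponential_general {d : ℕ}
    (M : Set (EuclideanSpace ℝ (Fin d))) (hM : IsCompact M)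
    (f : EuclideanSpace ℝ (Fin d) → EuclideanSpace ℝ (Fin d))
    (hf : ContDiff ℝ 1 f) (hfM : MapsTo f M M)
    (lam : ℝ) (hlam : 0 < lam)
    (C α : ℝ) (hα : 0 < α)
    (hGamma : ∀ n : ℕ, 1 ≤ n →
      volume (GammaSet M f lam n) ≤ ENNReal.ofReal (C * Real.exp (-α * n))) :
    ∃ β : ℝ, 0 < β ∧ ∀ᵐ x ∂(volume.restrict M), ∃ Cx : ℝ, 0 < Cx ∧
      ∀ n : ℕ, 1 ≤ n → ∀ y ∈ M, f^[n] y = x →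
        Cx * Real.exp (β * n) < absDetIter f n y := by
  have hγ : 0 < min lam α := lt_min hlam hα
  refine ⟨min lam α / 2, half_pos hγ, ae_restrict_of_ae ?_⟩
  filter_upwards [ae_eventually_notMem_image_slow hM.isClosed hf hfM hγ (min_le_left _ _)
      (min_le_right _ _) hGamma, ae_absDetIter_pos_of_iterate_eq (hf.differentiable one_ne_zero)]
    with x hfast hpos
  obtain ⟨c, hc, hcx⟩ := exists_pos_forall_of_eventually_one
    (P := fun n c ↦ ∀ y ∈ M, f^[n] y = x → c * exp (min lam α / 2 * n) ≤ absDetIter f n y)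
    (fun n c c' hcc' h y hy hyx ↦ (mul_le_mul_of_nonneg_right hcc' (exp_pos _).le).trans
      (h y hy hyx))
    (exists_pos_mul_exp_le_absDetIter hM hf hpos _)
    (hfast.mono fun n hn y hy hyx ↦ (one_mul (exp _)).le.trans
      (not_lt.1 fun hlt ↦ hn ⟨y, ⟨hy, hlt⟩, hyx⟩))
  refine ⟨c / 2, half_pos hc, fun n _ y hy hyx ↦ ?_⟩
  calc c / 2 * exp (min lam α / 2 * n) < c * exp (min lam α / 2 * n) := by
        gcongr
        linarith
    _ ≤ absDetIter f n y := hcx n y hy hyx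

/-- Exponential case: if `Leb (Γ_n) ≤ C e^{-α n}` then one gets backward contraction at an
exponential rate `e^{β n}`. -/
theorem backward_contraction_exponential {d : ℕ}
    (M : Set (EuclideanSpace ℝ (Fin d))) (hM : IsCompact M)
    (f : EuclideanSpace ℝ (Fin d) → EuclideanSpace ℝ (Fin d))
    (hf : ContDiff ℝ 1 f) (hfM : MapsTo f M M)
    (lam : ℝ) (hlam : 0 < lam)
    (h_expanding : ∀ᵐ x ∂(volume.restrict M),
      ∃ n : ℕ, 1 ≤ n ∧ lam < (1 / n) * Real.log (absDetIter f n x))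
    (C α : ℝ) (hC : 0 < C) (hα : 0 < α)
    (hGamma : ∀ n : ℕ, 1 ≤ n →
      volume (GammaSet M f lam n) ≤ ENNReal.ofReal (C * Real.exp (-α * n))) :
    ∃ β : ℝ, 0 < β ∧ ∀ᵐ x ∂(volume.restrict M), ∃ Cx : ℝ, 0 < Cx ∧
      ∀ n : ℕ, 1 ≤ n → ∀ y ∈ M, f^[n] y = x →
        Cx * Real.exp (β * n) < absDetIter f n y :=
  backward_contraction_exponential_general M hM f hf hfM lam hlam C α hα hGamma
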